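/- arXiv:1910.04534 — 4 statements merged into one kernel-verified Lean document; each statement's English description precedes it below -/
import Mathlib

section
/- Let δ, γ ∈ (−1, +∞) and let y ∈ K. Then y solves problem (P), i.e. ((1 + δ y(x)) y'(x))' + 2x(1 + γ y(x)) y'(x) = 0 on (0,∞), y(0) = 0 and lim_{x→+∞} y(x) = 1, if and only if T(y) = y. -/
open Real Filter Set


/-- `F(x; h)` from the paper. -/
noncomputable def Fint (δ γ : ℝ) (h : ℝ → ℝ) (x : ℝ) : ℝ :=
  ∫ w in (0:ℝ)..x,
    Real.exp (-(∫ z in (0:ℝ)..w, 2*z*(1+γ*h z)/(1+δ*h z))) * (1/(1+δ*h w))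

/-- `y` solves problem (P): `((1+δy)y')' + 2x(1+γy)y' = 0` on `(0,∞)`,
`y(0) = 0` and `y(x) → 1` as `x → ∞`. -/
def SolvesP (δ γ : ℝ) (y : ℝ → ℝ) : Prop :=
  (∀ x ∈ Set.Ioi (0:ℝ), DifferentiableAt ℝ y x) ∧
  (∀ x ∈ Set.Ioi (0:ℝ),
    HasDerivAt (fun t => (1 + δ * y t) * deriv y t)
      (-(2 * x * (1 + γ * y x) * deriv y x)) x) ∧
  y 0 = 0 ∧ Tendsto y atTop (nhds 1)

/-- `y` belongs to the set `K` of bounded analytic functions on `[0,∞)` with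
`‖y‖∞ ≤ 1`, `y ≥ 0` and `y(0) = 0`. -/
def MemK (y : ℝ → ℝ) : Prop :=
  AnalyticOn ℝ y (Set.Ici 0) ∧ (∀ x ≥ (0:ℝ), 0 ≤ y x ∧ y x ≤ 1) ∧ y 0 = 0

open Topology

/-! With `a = 1 + δ y`, positive because `-1 < δ` and `0 ≤ y ≤ 1`, and `Λ = ∫₀ˣ 2z(1+γy)/a`,
the equation of (P) reads `(a y')' = -Λ' (a y')`. Hence `a y' e^Λ` is constant, i.e.
`y' = c e^(-Λ)/a = c F'`, and `y(0) = 0 = F(0)` gives `y = c F`; the limit `y → 1` forces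
`c = 1/L`. Conversely every multiple of `F` solves the equation, and `F/L → 1` because
`L > 0`, `F` being strictly increasing from `F(0) = 0`. -/

lemma one_add_mul_pos {δ t : ℝ} (hδ : -1 < δ) (ht₀ : 0 ≤ t) (ht₁ : t ≤ 1) :
    0 < 1 + δ * t := by
  rcases le_or_gt 0 δ with h | h <;> nlinarith

lemma StrictMonoOn.lt_of_tendsto_atTop {α β : Type*} [LinearOrder α] [NoMaxOrder α]
    [LinearOrder β] [TopologicalSpace β] [OrderClosedTopology β] {f : α → β} {a : α} {L : β}
    (hf : StrictMonoOn f (Ici a)) (hL : Tendsto f atTop (𝓝 L)) : f a < L := by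
  obtain ⟨b, hab⟩ := exists_gt a
  have : Nonempty α := ⟨a⟩
  refine (hf self_mem_Ici hab.le hab).trans_le (ge_of_tendsto hL ?_)
  filter_upwards [eventually_ge_atTop b] with x hbx
  exact hf.monotoneOn hab.le (hab.le.trans hbx) hbx

lemma eq_of_continuousOn_Ici_of_hasDerivAt_zero {g : ℝ → ℝ} {a x : ℝ}
    (hg : ContinuousOn g (Ici a)) (hd : ∀ x > a, HasDerivAt g 0 x) (hx : a ≤ x) :
    g x = g a := by
  have hdiff : DifferentiableOn ℝ g (interior (Ici a)) := by
    rw [interior_Ici]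
    exact fun x hx => (hd x hx).differentiableAt.differentiableWithinAt
  have hzero : ∀ x ∈ interior (Ici a), deriv g x = 0 := by
    rw [interior_Ici]
    exact fun x hx => (hd x hx).deriv
  exact le_antisymm
    (antitoneOn_of_deriv_nonpos (convex_Ici a) hg hdiff (fun x hx => (hzero x hx).le)
      self_mem_Ici hx hx)
    (monotoneOn_of_deriv_nonneg (convex_Ici a) hg hdiff (fun x hx => (hzero x hx).ge)
      self_mem_Ici hx hx)

lemma hasDerivAt_integral_of_continuousOn_Ici {g : ℝ → ℝ} {a x : ℝ}
    (hg : ContinuousOn g (Ici a)) (hx : a < x) :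
    HasDerivAt (fun u => ∫ t in a..u, g t) (g x) x :=
  intervalIntegral.integral_hasDerivAt_right
    (hg.mono (by rw [uIcc_of_le hx.le]; exact Icc_subset_Ici_self)).intervalIntegrable
    ((hg.mono Ioi_subset_Ici_self).stronglyMeasurableAtFilter isOpen_Ioi x hx)
    (hg.continuousAt (Ici_mem_nhds hx))

lemma continuousOn_integral_of_continuousOn_Ici {g : ℝ → ℝ} {a : ℝ}
    (hg : ContinuousOn g (Ici a)) : ContinuousOn (fun u => ∫ t in a..u, g t) (Ici a) := by
  intro x hx
  have hax : a ≤ x + 1 := by linarith [mem_Ici.1 hx]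
  have hprim := intervalIntegral.continuousOn_primitive_interval (μ := MeasureTheory.volume)
    ((hg.mono (by rw [uIcc_of_le hax]; exact Icc_subset_Ici_self)).integrableOn_compact
      isCompact_uIcc)
  rw [uIcc_of_le hax] at hprim
  refine (hprim x ⟨hx, by linarith⟩).mono_of_mem_nhdsWithin ?_
  rw [← Ici_inter_Iic]
  exact inter_mem_nhdsWithin _ (Iic_mem_nhds (lt_add_one x))

lemma hasDerivAt_mul_exp_of_hasDerivAt_neg_mul {v N : ℝ → ℝ} {q x : ℝ}
    (hv : HasDerivAt v (-(q * v x)) x) (hN : HasDerivAt N q x) :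
    HasDerivAt (fun t => v t * exp (N t)) 0 x :=
  (hv.fun_mul hN.exp).congr_deriv (by ring)

namespace Fint

variable {δ γ : ℝ} {y : ℝ → ℝ}

variable (δ γ y) in
noncomputable def rate (z : ℝ) : ℝ := 2 * z * (1 + γ * y z) / (1 + δ * y z)

variable (δ γ y) in
noncomputable def exponent (w : ℝ) : ℝ := ∫ z in (0:ℝ)..w, rate δ γ y z

variable (δ γ y) in
noncomputable def integrand (w : ℝ) : ℝ := exp (-exponent δ γ y w) * (1 / (1 + δ * y w))

lemma mul_rate {z : ℝ} (hz : 1 + δ * y z ≠ 0) :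
    (1 + δ * y z) * rate δ γ y z = 2 * z * (1 + γ * y z) :=
  mul_div_cancel₀ _ hz

lemma mul_integrand {w : ℝ} (hw : 1 + δ * y w ≠ 0) :
    (1 + δ * y w) * integrand δ γ y w = exp (-exponent δ γ y w) := by
  rw [integrand]
  field_simp

lemma integrand_pos (hδy : ∀ x, 0 ≤ x → 0 < 1 + δ * y x) {w : ℝ} (hw : 0 ≤ w) :
    0 < integrand δ γ y w :=
  mul_pos (exp_pos _) (one_div_pos.2 (hδy w hw))

lemma continuousOn_rate (hy : ContinuousOn y (Ici 0)) (hδy : ∀ x, 0 ≤ x → 0 < 1 + δ * y x) :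
    ContinuousOn (rate δ γ y) (Ici 0) := by
  unfold rate
  exact ((continuousOn_const.mul continuousOn_id).mul (continuousOn_const.add
    (continuousOn_const.mul hy))).div (continuousOn_const.add (continuousOn_const.mul hy))
    fun x hx => (hδy x hx).ne'

lemma hasDerivAt_exponent (hy : ContinuousOn y (Ici 0)) (hδy : ∀ x, 0 ≤ x → 0 < 1 + δ * y x)
    {x : ℝ} (hx : 0 < x) : HasDerivAt (exponent δ γ y) (rate δ γ y x) x :=
  hasDerivAt_integral_of_continuousOn_Ici (continuousOn_rate hy hδy) hx

lemma continuousOn_integrand (hy : ContinuousOn y (Ici 0))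
    (hδy : ∀ x, 0 ≤ x → 0 < 1 + δ * y x) : ContinuousOn (integrand δ γ y) (Ici 0) := by
  unfold integrand exponent
  exact (continuous_exp.comp_continuousOn (continuousOn_integral_of_continuousOn_Ici
    (continuousOn_rate hy hδy)).neg).mul (continuousOn_const.div
    (continuousOn_const.add (continuousOn_const.mul hy)) fun x hx => (hδy x hx).ne')

end Fint

open Fint

section

variable {δ γ : ℝ} {y : ℝ → ℝ}

variable (δ γ y) in
lemma Fint_zero : Fint δ γ y 0 = 0 :=
  intervalIntegral.integral_same

lemma hasDerivAt_Fint (hy : ContinuousOn y (Ici 0))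
    (hδy : ∀ x, 0 ≤ x → 0 < 1 + δ * y x) {x : ℝ} (hx : 0 < x) :
    HasDerivAt (Fint δ γ y) (integrand δ γ y x) x :=
  hasDerivAt_integral_of_continuousOn_Ici (continuousOn_integrand hy hδy) hx

lemma continuousOn_Fint (hy : ContinuousOn y (Ici 0))
    (hδy : ∀ x, 0 ≤ x → 0 < 1 + δ * y x) : ContinuousOn (Fint δ γ y) (Ici 0) :=
  continuousOn_integral_of_continuousOn_Ici (continuousOn_integrand hy hδy)

lemma strictMonoOn_Fint (hy : ContinuousOn y (Ici 0))
    (hδy : ∀ x, 0 ≤ x → 0 < 1 + δ * y x) : StrictMonoOn (Fint δ γ y) (Ici 0) := by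
  refine strictMonoOn_of_deriv_pos (convex_Ici 0) (continuousOn_Fint hy hδy) fun x hx => ?_
  rw [interior_Ici] at hx
  rw [(hasDerivAt_Fint hy hδy hx).deriv]
  exact integrand_pos hδy (le_of_lt hx)

lemma pos_of_tendsto_Fint (hy : ContinuousOn y (Ici 0))
    (hδy : ∀ x, 0 ≤ x → 0 < 1 + δ * y x) {L : ℝ} (hL : Tendsto (Fint δ γ y) atTop (𝓝 L)) :
    0 < L :=
  Fint_zero δ γ y ▸ (strictMonoOn_Fint hy hδy).lt_of_tendsto_atTop hL

lemma exists_eq_const_mul_Fint_of_solvesP (hy : ContinuousOn y (Ici 0))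
    (hδy : ∀ x, 0 ≤ x → 0 < 1 + δ * y x) (hP : SolvesP δ γ y) :
    ∃ c, ∀ x, 0 ≤ x → y x = c * Fint δ γ y x := by
  obtain ⟨hdiff, hode, hy0, -⟩ := hP
  have hfirst : ∀ x > 0, HasDerivAt
      (fun t => (1 + δ * y t) * deriv y t * exp (exponent δ γ y t)) 0 x := fun x hx => by
    have h := hode x hx
    rw [← mul_rate (hδy x hx.le).ne'] at h
    exact hasDerivAt_mul_exp_of_hasDerivAt_neg_mul (h.congr_deriv (by ring))
      (hasDerivAt_exponent hy hδy hx)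
  obtain ⟨c, hc⟩ := isOpen_Ioi.exists_is_const_of_deriv_eq_zero isPreconnected_Ioi
    (fun x hx => (hfirst x hx).differentiableAt.differentiableWithinAt)
    (fun x hx => (hfirst x hx).deriv)
  have hderiv : ∀ x > 0, HasDerivAt (fun t => y t - c * Fint δ γ y t) 0 x := by
    intro x hx
    have hyx : deriv y x = c * integrand δ γ y x := by
      have hne := (hδy x hx.le).ne'
      rw [← hc x hx, integrand, exp_neg]
      field_simp
    exact ((hdiff x hx).hasDerivAt.sub ((hasDerivAt_Fint hy hδy hx).const_mul c)).congr_deriv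
      (by rw [hyx, sub_self])
  refine ⟨c, fun x hx => ?_⟩
  have := eq_of_continuousOn_Ici_of_hasDerivAt_zero (g := fun t => y t - c * Fint δ γ y t)
    (hy.sub (continuousOn_const.mul (continuousOn_Fint hy hδy))) hderiv hx
  rwa [hy0, Fint_zero, mul_zero, sub_zero, sub_eq_zero] at this

lemma hasDerivAt_of_eq_const_mul_Fint (hy : ContinuousOn y (Ici 0))
    (hδy : ∀ x, 0 ≤ x → 0 < 1 + δ * y x) {c : ℝ} (hc : ∀ x, 0 ≤ x → y x = c * Fint δ γ y x)
    {x : ℝ} (hx : 0 < x) : HasDerivAt y (c * integrand δ γ y x) x :=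
  ((hasDerivAt_Fint hy hδy hx).const_mul c).congr_of_eventuallyEq <|
    eventually_of_mem (Ici_mem_nhds hx) hc

lemma hasDerivAt_ode_of_eq_const_mul_Fint (hy : ContinuousOn y (Ici 0))
    (hδy : ∀ x, 0 ≤ x → 0 < 1 + δ * y x) {c : ℝ} (hc : ∀ x, 0 ≤ x → y x = c * Fint δ γ y x)
    {x : ℝ} (hx : 0 < x) :
    HasDerivAt (fun t => (1 + δ * y t) * deriv y t) (-(2 * x * (1 + γ * y x) * deriv y x)) x := by
  have hflux : ∀ t > 0, (1 + δ * y t) * deriv y t = c * exp (-exponent δ γ y t) := fun t ht => by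
    rw [(hasDerivAt_of_eq_const_mul_Fint hy hδy hc ht).deriv, mul_left_comm,
      mul_integrand (hδy t ht.le).ne']
  have hflux' : HasDerivAt (fun t => c * exp (-exponent δ γ y t))
      (c * (exp (-exponent δ γ y x) * -rate δ γ y x)) x :=
    (hasDerivAt_exponent hy hδy hx).neg.exp.const_mul c
  refine (hflux'.congr_of_eventuallyEq (eventually_of_mem (Ioi_mem_nhds hx) hflux)).congr_deriv ?_
  rw [← mul_rate (hδy x hx.le).ne']
  linear_combination rate δ γ y x * hflux x hx

end

theorem solution_iff_fixed_point_general (δ γ : ℝ) (hδ : -1 < δ)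
    (y : ℝ → ℝ) (hy : MemK y)
    (L : ℝ) (hL : Tendsto (Fint δ γ y) atTop (nhds L)) :
    SolvesP δ γ y ↔ ∀ x ≥ (0:ℝ), Fint δ γ y x / L = y x := by
  obtain ⟨hya, hyb, hy0⟩ := hy
  have hyc := hya.continuousOn
  have hδy : ∀ x, 0 ≤ x → 0 < 1 + δ * y x := fun x hx =>
    one_add_mul_pos hδ (hyb x hx).1 (hyb x hx).2
  have hL0 : L ≠ 0 := (pos_of_tendsto_Fint hyc hδy hL).ne'
  constructor
  · intro hP
    obtain ⟨c, hc⟩ := exists_eq_const_mul_Fint_of_solvesP hyc hδy hP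
    have hcL : c * L = 1 := tendsto_nhds_unique (hL.const_mul c)
      (hP.2.2.2.congr' (eventually_of_mem (Ici_mem_atTop 0) hc))
    intro x hx
    rw [hc x hx, div_eq_iff hL0, mul_right_comm, hcL, one_mul]
  · intro hfix
    have hc : ∀ x, 0 ≤ x → y x = L⁻¹ * Fint δ γ y x := fun x hx => by
      rw [← hfix x hx, div_eq_inv_mul]
    have hlim := hL.const_mul L⁻¹
    rw [inv_mul_cancel₀ hL0] at hlim
    exact ⟨fun x hx => (hasDerivAt_of_eq_const_mul_Fint hyc hδy hc hx).differentiableAt,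
      fun x hx => hasDerivAt_ode_of_eq_const_mul_Fint hyc hδy hc hx, hy0,
      hlim.congr' (eventually_of_mem (Ici_mem_atTop 0) fun x hx => (hc x hx).symm)⟩

theorem solution_iff_fixed_point (δ γ : ℝ) (hδ : -1 < δ) (hγ : -1 < γ)
    (y : ℝ → ℝ) (hy : MemK y)
    (L : ℝ) (hL : Tendsto (Fint δ γ y) atTop (nhds L)) :
    SolvesP δ γ y ↔ ∀ x ≥ (0:ℝ), Fint δ γ y x / L = y x :=
  solution_iff_fixed_point_general δ γ hδ y hy L hL
end

section
/- Let δ, γ ∈ (−1, +∞) and let h : [0,∞) → ℝ be continuous with 0 ≤ h(x) ≤ 1 for all x ≥ 0. Let f(w) := exp(−2w) and w̄(w) := ∫₀ʷ z(1 + γ h(z))/(1 + δ h(z)) dz. Then for every x ≥ 0, ∫₀ˣ f(w̄(w)) dw ≤ √π·max(1,1+δ)^{1/2} / (2·min(1,1+γ)^{1/2}). -/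
/-!
Since `1 + γ t` and `1 + δ t` are convex combinations of `1` and `1 + γ`, resp. `1 + δ`, for
`t ∈ [0, 1]`, the integrand of `w̄` is at least `c z` with `c = min 1 (1 + γ) / max 1 (1 + δ) > 0`.
Hence `w̄ w ≥ c w² / 2`, the outer integrand is dominated by the Gaussian `exp (-c w²)`, and the
integral of the latter over `[0, ∞)` is `√(π / c) / 2`.
-/

open Real Filter Set MeasureTheory

theorem min_one_one_add_le {a t : ℝ} (ht : t ∈ Icc (0 : ℝ) 1) :
    min 1 (1 + a) ≤ 1 + a * t :=
  (by ring : 1 + a * t = (1 - t) • (1 : ℝ) + t • (1 + a)) ▸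
    Convex.min_le_combo (1 : ℝ) (1 + a) (sub_nonneg.2 ht.2) ht.1 (sub_add_cancel 1 t)

theorem one_add_le_max_one {a t : ℝ} (ht : t ∈ Icc (0 : ℝ) 1) :
    1 + a * t ≤ max 1 (1 + a) :=
  (by ring : 1 + a * t = (1 - t) • (1 : ℝ) + t • (1 + a)) ▸
    Convex.combo_le_max (1 : ℝ) (1 + a) (sub_nonneg.2 ht.2) ht.1 (sub_add_cancel 1 t)

theorem one_add_mul_pos_s8 {a t : ℝ} (ha : -1 < a) (ht : t ∈ Icc (0 : ℝ) 1) : 0 < 1 + a * t :=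
  (lt_min one_pos (by linarith)).trans_le (min_one_one_add_le ht)

theorem min_div_max_mul_le {γ δ t z : ℝ} (hγ : -1 < γ) (hδ : -1 < δ) (ht : t ∈ Icc (0 : ℝ) 1)
    (hz : 0 ≤ z) :
    min 1 (1 + γ) / max 1 (1 + δ) * z ≤ z * (1 + γ * t) / (1 + δ * t) := by
  have hm : 0 < min 1 (1 + γ) := lt_min one_pos (by linarith)
  rw [div_mul_eq_mul_div, mul_comm _ z]
  have hnum := min_one_one_add_le (a := γ) ht
  exact div_le_div₀ (mul_nonneg hz (hm.le.trans hnum)) (mul_le_mul_of_nonneg_left hnum hz)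
    (one_add_mul_pos_s8 hδ ht) (one_add_le_max_one ht)

theorem mul_sq_div_two_le_integral {g : ℝ → ℝ} {c w : ℝ} (hw : 0 ≤ w)
    (hg : IntervalIntegrable g volume 0 w) (hle : ∀ z ∈ Icc 0 w, c * z ≤ g z) :
    c * w ^ 2 / 2 ≤ ∫ z in (0:ℝ)..w, g z := by
  have hlin : ∫ z in (0:ℝ)..w, c * z = c * w ^ 2 / 2 := by
    rw [intervalIntegral.integral_const_mul, integral_id]
    ring
  rw [← hlin]
  exact intervalIntegral.integral_mono_on hw
    ((continuous_const_mul c).intervalIntegrable _ _) hg hle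

theorem integral_exp_neg_mul_sq_le {c x : ℝ} (hc : 0 < c) (hx : 0 ≤ x) :
    ∫ w in (0:ℝ)..x, exp (-c * w ^ 2) ≤ √(π / c) / 2 := by
  rw [intervalIntegral.integral_of_le hx, ← integral_gaussian_Ioi c]
  exact setIntegral_mono_set (integrable_exp_neg_mul_sq hc).integrableOn
    (Eventually.of_forall fun w => (exp_pos _).le) Ioc_subset_Ioi_self.eventuallyLE

theorem integral_exp_neg_le_of_mul_sq_le {F : ℝ → ℝ} {c x : ℝ} (hc : 0 < c) (hx : 0 ≤ x)
    (hF : ∀ w ∈ Icc 0 x, c * w ^ 2 ≤ F w) :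
    ∫ w in (0:ℝ)..x, exp (-F w) ≤ √(π / c) / 2 := by
  refine le_trans ?_ (integral_exp_neg_mul_sq_le hc hx)
  rw [intervalIntegral.integral_of_le hx, intervalIntegral.integral_of_le hx]
  -- no integrability of `exp (-F ·)` is needed: a non-integrable function integrates to `0`
  refine integral_mono_of_nonneg (Eventually.of_forall fun w => (exp_pos _).le)
    (integrable_exp_neg_mul_sq hc).integrableOn ?_
  filter_upwards [ae_restrict_mem measurableSet_Ioc] with w hw
  exact exp_le_exp.2 (by linarith [hF w (Ioc_subset_Icc_self hw)])

theorem sqrt_pi_div_div_two {m M : ℝ} (hM : 0 ≤ M) :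
    √(π / (m / M)) / 2 = √π * M ^ ((1:ℝ)/2) / (2 * m ^ ((1:ℝ)/2)) := by
  rw [← sqrt_eq_rpow, ← sqrt_eq_rpow, div_div_eq_mul_div, sqrt_div (by positivity),
    sqrt_mul pi_pos.le]
  ring

theorem integral_exp_estimate (δ γ : ℝ) (hδ : -1 < δ) (hγ : -1 < γ)
    (h : ℝ → ℝ) (hcont : ContinuousOn h (Set.Ici 0))
    (hb : ∀ x ≥ (0:ℝ), 0 ≤ h x ∧ h x ≤ 1) :
    ∀ x ≥ (0:ℝ),
      (∫ w in (0:ℝ)..x,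
        Real.exp (-(2 * ∫ z in (0:ℝ)..w, z*(1+γ*h z)/(1+δ*h z)))) ≤
      Real.sqrt π * (max 1 (1+δ)) ^ ((1:ℝ)/2) / (2 * (min 1 (1+γ)) ^ ((1:ℝ)/2)) := by
  intro x hx
  have hm : 0 < min 1 (1 + γ) := lt_min one_pos (by linarith)
  have hM : 0 < max 1 (1 + δ) := one_pos.trans_le (le_max_left _ _)
  rw [← sqrt_pi_div_div_two hM.le]
  refine integral_exp_neg_le_of_mul_sq_le (div_pos hm hM) hx fun w hw => ?_
  have hint : IntervalIntegrable (fun z => z * (1 + γ * h z) / (1 + δ * h z)) volume 0 w := by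
    have hcont' : ContinuousOn h (Icc 0 w) := hcont.mono Icc_subset_Ici_self
    refine ContinuousOn.intervalIntegrable ?_
    rw [uIcc_of_le hw.1]
    refine ContinuousOn.div (by fun_prop) (by fun_prop) ?_
    exact fun z hz => (one_add_mul_pos_s8 hδ (hb z hz.1)).ne'
  linarith [mul_sq_div_two_le_integral hw.1 hint fun z hz =>
    min_div_max_mul_le hγ hδ (hb z hz.1) hz.1]
end

section
/- Let δ, γ ∈ (−1, +∞) and let h₁, h₂ : [0,∞) → ℝ be continuous with 0 ≤ hᵢ(x) ≤ 1 for all x ≥ 0 (i = 1, 2). Then for every x ∈ [0,∞], |F(x; h₁) − F(x; h₂)| ≤ M₃(δ,γ)·‖h₁ − h₂‖∞, where M₃(δ,γ) := (√π·max(1,1+δ)^{1/2} / (4·min(1,1+δ)²·min(1,1+γ)^{1/2})) · (2|δ| + |δ−γ|·max(1,1+δ)/(min(1,1+δ)·min(1,1+γ))) and ‖h₁ − h₂‖∞ := sup_{x ≥ 0} |h₁(x) − h₂(x)|. In particular, the same bound holds for |F(+∞; h₁) − F(+∞; h₂)|. -/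
open Real Filter Set

/-- The constant `M₃(δ,γ)` from the paper. -/
noncomputable def M3 (δ γ : ℝ) : ℝ :=
  (Real.sqrt π * (max 1 (1+δ)) ^ ((1:ℝ)/2) /
    (4 * (min 1 (1+δ))^2 * (min 1 (1+γ)) ^ ((1:ℝ)/2))) *
  (2*|δ| + |δ-γ| * (max 1 (1+δ)) / ((min 1 (1+δ)) * (min 1 (1+γ))))

/-!
Write `m = min 1 (1 + δ)` and `c = min 1 (1 + γ) / max 1 (1 + δ)`, and let `K` bound `|h₁ - h₂|`
on `[0, ∞)`. The exponent `G_h(w) = ∫₀ʷ 2z(1 + γh)/(1 + δh)` satisfies `G_h(w) ≥ c w²` and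
`|G_{h₁}(w) - G_{h₂}(w)| ≤ |δ - γ| K w² / m²`, while `|1/(1 + δh₁) - 1/(1 + δh₂)| ≤ |δ| K / m²`.
Since `exp (-·)` is `exp (-c w²)`-Lipschitz on `[c w², ∞)`, the two integrands of `F` differ by
at most `(|δ|/m² + |δ - γ| w²/m³) exp (-c w²) K`, and the Gaussian moments
`∫₀^∞ exp (-c w²) = √(π/c)/2`, `∫₀^∞ w² exp (-c w²) = √π/(4 c^{3/2})` add up to `M₃(δ,γ) K`.
The bound at `+∞` follows by passing to the limit.
-/

open MeasureTheory

lemma abs_exp_neg_sub_exp_neg_le {a b C : ℝ} (ha : C ≤ a) (hb : C ≤ b) :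
    |exp (-a) - exp (-b)| ≤ exp (-C) * |a - b| := by
  wlog hab : b ≤ a generalizing a b
  · rw [abs_sub_comm, abs_sub_comm a b]
    exact this hb ha (le_of_not_ge hab)
  have hsplit : exp (-a) = exp (-b) * exp (-(a - b)) := by rw [← exp_add]; ring_nf
  rw [abs_sub_comm, abs_of_nonneg (sub_nonneg.2 (exp_le_exp.2 (by linarith))),
    abs_of_nonneg (sub_nonneg.2 hab), hsplit]
  calc exp (-b) - exp (-b) * exp (-(a - b)) = exp (-b) * (1 - exp (-(a - b))) := by ring
    _ ≤ exp (-C) * (a - b) :=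
      mul_le_mul (exp_le_exp.2 (by linarith)) (by linarith [add_one_le_exp (-(a - b))])
        (sub_nonneg.2 (exp_le_one_iff.2 (by linarith))) (exp_pos _).le

lemma abs_exp_neg_mul_sub_exp_neg_mul_le {a b C u v : ℝ} (ha : C ≤ a) (hb : C ≤ b) :
    |exp (-a) * u - exp (-b) * v| ≤ exp (-C) * (|u - v| + |a - b| * |v|) := by
  calc |exp (-a) * u - exp (-b) * v|
      = |exp (-a) * (u - v) + (exp (-a) - exp (-b)) * v| := by ring_nf
    _ ≤ exp (-a) * |u - v| + |exp (-a) - exp (-b)| * |v| := by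
      grw [abs_add_le, abs_mul, abs_mul, abs_of_pos (exp_pos _)]
    _ ≤ exp (-C) * |u - v| + exp (-C) * |a - b| * |v| := by
      gcongr
      exact abs_exp_neg_sub_exp_neg_le ha hb
    _ = exp (-C) * (|u - v| + |a - b| * |v|) := by ring

lemma abs_div_one_add_mul_sub_le {δ γ m a b : ℝ} (hm : 0 < m) (ha : m ≤ 1 + δ * a)
    (hb : m ≤ 1 + δ * b) :
    |(1 + γ * a) / (1 + δ * a) - (1 + γ * b) / (1 + δ * b)| ≤ |δ - γ| * |a - b| / m ^ 2 := by
  have ha' : 0 < 1 + δ * a := hm.trans_le ha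
  have hb' : 0 < 1 + δ * b := hm.trans_le hb
  rw [div_sub_div _ _ ha'.ne' hb'.ne',
    show (1 + γ * a) * (1 + δ * b) - (1 + δ * a) * (1 + γ * b) = (δ - γ) * (b - a) by ring,
    abs_div, abs_mul, abs_sub_comm b, abs_of_pos (mul_pos ha' hb'), sq]
  gcongr

lemma min_one_le_one_add_mul {δ t : ℝ} (ht₀ : 0 ≤ t) (ht₁ : t ≤ 1) :
    min 1 (1 + δ) ≤ 1 + δ * t := by
  rcases le_total 0 δ with hδ | hδ
  · exact (min_le_left _ _).trans (by nlinarith)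
  · exact (min_le_right _ _).trans (by nlinarith)

lemma one_add_mul_le_max_one {δ t : ℝ} (ht₀ : 0 ≤ t) (ht₁ : t ≤ 1) :
    1 + δ * t ≤ max 1 (1 + δ) := by
  rcases le_total 0 δ with hδ | hδ
  · exact (by nlinarith : 1 + δ * t ≤ 1 + δ).trans (le_max_right _ _)
  · exact (by nlinarith : 1 + δ * t ≤ 1).trans (le_max_left _ _)

lemma min_div_max_le_div_one_add_mul {δ γ t : ℝ} (hδ : -1 < δ) (hγ : -1 ≤ γ) (ht₀ : 0 ≤ t)
    (ht₁ : t ≤ 1) :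
    min 1 (1 + γ) / max 1 (1 + δ) ≤ (1 + γ * t) / (1 + δ * t) :=
  div_le_div₀ (by nlinarith) (min_one_le_one_add_mul ht₀ ht₁)
    ((lt_min one_pos (by linarith)).trans_le (min_one_le_one_add_mul ht₀ ht₁))
    (one_add_mul_le_max_one ht₀ ht₁)

lemma integral_const_mul_two_mul (k w : ℝ) : ∫ z in (0 : ℝ)..w, k * (2 * z) = k * w ^ 2 := by
  rw [intervalIntegral.integral_const_mul, intervalIntegral.integral_const_mul, integral_id]
  ring

lemma integral_Ioi_sq_mul_exp_neg_mul_sq {c : ℝ} (hc : 0 < c) :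
    ∫ w in Ioi (0 : ℝ), w ^ 2 * exp (-c * w ^ 2) = √π / (4 * c ^ ((3 : ℝ) / 2)) := by
  have h := integral_rpow_mul_exp_neg_mul_rpow two_pos (by norm_num : (-1 : ℝ) < 2) hc
  simp only [rpow_two] at h
  rw [h, show ((2 : ℝ) + 1) / 2 = 1 / 2 + 1 by norm_num, Gamma_add_one (by norm_num),
    Gamma_one_half_eq, show -((2 : ℝ) + 1) / 2 = -(3 / 2) by norm_num, rpow_neg hc.le]
  field_simp
  ring

lemma integrableOn_Ioi_sq_mul_exp_neg_mul_sq {c : ℝ} (hc : 0 < c) :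
    IntegrableOn (fun w : ℝ => w ^ 2 * exp (-c * w ^ 2)) (Ioi 0) := by
  simpa only [rpow_two] using integrableOn_rpow_mul_exp_neg_mul_sq hc (s := 2) (by norm_num)

lemma integrableOn_Ioi_quadratic_mul_exp_neg_mul_sq {c : ℝ} (hc : 0 < c) (A B : ℝ) :
    IntegrableOn (fun w : ℝ => (A + B * w ^ 2) * exp (-c * w ^ 2)) (Ioi 0) := by
  simpa only [IntegrableOn, add_mul, mul_assoc, Pi.add_def] using
    ((integrable_exp_neg_mul_sq hc).integrableOn.const_mul A).add
      ((integrableOn_Ioi_sq_mul_exp_neg_mul_sq hc).const_mul B)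

lemma integral_Ioi_quadratic_mul_exp_neg_mul_sq {c : ℝ} (hc : 0 < c) (A B : ℝ) :
    ∫ w in Ioi (0 : ℝ), (A + B * w ^ 2) * exp (-c * w ^ 2) =
      A * (√(π / c) / 2) + B * (√π / (4 * c ^ ((3 : ℝ) / 2))) := by
  simp only [add_mul, mul_assoc]
  rw [integral_add ((integrable_exp_neg_mul_sq hc).integrableOn.const_mul A)
      ((integrableOn_Ioi_sq_mul_exp_neg_mul_sq hc).const_mul B),
    integral_const_mul, integral_const_mul, integral_gaussian_Ioi,
    integral_Ioi_sq_mul_exp_neg_mul_sq hc]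

lemma abs_intervalIntegral_sub_le_setIntegral_Ioi {f g b : ℝ → ℝ} {x : ℝ} (hx : 0 ≤ x)
    (hf : IntervalIntegrable f volume 0 x) (hg : IntervalIntegrable g volume 0 x)
    (hb : IntegrableOn b (Ioi 0)) (hb₀ : ∀ w > 0, 0 ≤ b w)
    (hfg : ∀ w ∈ Ioc 0 x, |f w - g w| ≤ b w) :
    |(∫ w in (0 : ℝ)..x, f w) - ∫ w in (0 : ℝ)..x, g w| ≤ ∫ w in Ioi 0, b w := by
  rw [← intervalIntegral.integral_sub hf hg, ← norm_eq_abs]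
  calc _ ≤ ∫ w in (0 : ℝ)..x, b w :=
        intervalIntegral.norm_integral_le_of_norm_le hx (ae_of_all _ hfg)
          ((intervalIntegrable_iff_integrableOn_Ioc_of_le hx).2
            (hb.mono_set Ioc_subset_Ioi_self))
    _ = ∫ w in Ioc 0 x, b w := intervalIntegral.integral_of_le hx
    _ ≤ ∫ w in Ioi 0, b w :=
        setIntegral_mono_set hb ((ae_restrict_iff' measurableSet_Ioi).2 (ae_of_all _ hb₀))
          Ioc_subset_Ioi_self.eventuallyLE

noncomputable def Frate (δ γ : ℝ) (h : ℝ → ℝ) (z : ℝ) : ℝ := 2 * z * (1 + γ * h z) / (1 + δ * h z)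

noncomputable def Fexponent (δ γ : ℝ) (h : ℝ → ℝ) (w : ℝ) : ℝ := ∫ z in (0 : ℝ)..w, Frate δ γ h z

noncomputable def Fintegrand (δ γ : ℝ) (h : ℝ → ℝ) (w : ℝ) : ℝ :=
  exp (-Fexponent δ γ h w) * (1 / (1 + δ * h w))

lemma Fint_eq_integral_Fintegrand (δ γ : ℝ) (h : ℝ → ℝ) (x : ℝ) :
    Fint δ γ h x = ∫ w in (0 : ℝ)..x, Fintegrand δ γ h w := rfl

section

variable {δ γ m c K w x : ℝ} {h h₁ h₂ : ℝ → ℝ}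

lemma continuousOn_Frate (hh : ContinuousOn h (Ici 0)) (hm : 0 < m)
    (hden : ∀ t ≥ 0, m ≤ 1 + δ * h t) : ContinuousOn (Frate δ γ h) (Ici 0) := by
  unfold Frate
  exact ContinuousOn.div (by fun_prop) (by fun_prop) fun t ht => (hm.trans_le (hden t ht)).ne'

lemma intervalIntegrable_Frate (hh : ContinuousOn h (Ici 0)) (hm : 0 < m)
    (hden : ∀ t ≥ 0, m ≤ 1 + δ * h t) (hw : 0 ≤ w) :
    IntervalIntegrable (Frate δ γ h) volume 0 w :=
  ((continuousOn_Frate hh hm hden).mono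
    (by rw [uIcc_of_le hw]; exact Icc_subset_Ici_self)).intervalIntegrable

lemma continuousOn_Fintegrand (hh : ContinuousOn h (Ici 0)) (hm : 0 < m)
    (hden : ∀ t ≥ 0, m ≤ 1 + δ * h t) (hx : 0 ≤ x) :
    ContinuousOn (Fintegrand δ γ h) (Icc 0 x) := by
  have hG : ContinuousOn (Fexponent δ γ h) (Icc 0 x) := by
    unfold Fexponent
    simpa only [uIcc_of_le hx] using intervalIntegral.continuousOn_primitive_interval'
      (intervalIntegrable_Frate (γ := γ) hh hm hden hx) left_mem_uIcc
  have hh' : ContinuousOn h (Icc 0 x) := hh.mono Icc_subset_Ici_self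
  unfold Fintegrand
  exact (continuous_exp.comp_continuousOn hG.neg).mul (ContinuousOn.div continuousOn_const
    (by fun_prop) fun t ht => (hm.trans_le (hden t ht.1)).ne')

lemma mul_sq_le_Fexponent (hh : ContinuousOn h (Ici 0)) (hm : 0 < m)
    (hden : ∀ t ≥ 0, m ≤ 1 + δ * h t) (hc : ∀ t ≥ 0, c ≤ (1 + γ * h t) / (1 + δ * h t))
    (hw : 0 ≤ w) : c * w ^ 2 ≤ Fexponent δ γ h w := by
  rw [← integral_const_mul_two_mul]
  refine intervalIntegral.integral_mono_on hw
    ((by fun_prop : Continuous _).intervalIntegrable _ _) (intervalIntegrable_Frate hh hm hden hw)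
    fun z hz => ?_
  rw [Frate, mul_div_assoc, mul_comm c]
  exact mul_le_mul_of_nonneg_left (hc z hz.1) (by linarith [hz.1])

lemma abs_Fexponent_sub_le (hh₁ : ContinuousOn h₁ (Ici 0)) (hh₂ : ContinuousOn h₂ (Ici 0))
    (hm : 0 < m) (hden₁ : ∀ t ≥ 0, m ≤ 1 + δ * h₁ t) (hden₂ : ∀ t ≥ 0, m ≤ 1 + δ * h₂ t)
    (hK : ∀ t ≥ 0, |h₁ t - h₂ t| ≤ K) (hw : 0 ≤ w) :
    |Fexponent δ γ h₁ w - Fexponent δ γ h₂ w| ≤ |δ - γ| * K / m ^ 2 * w ^ 2 := by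
  rw [Fexponent, Fexponent, ← intervalIntegral.integral_sub
    (intervalIntegrable_Frate hh₁ hm hden₁ hw) (intervalIntegrable_Frate hh₂ hm hden₂ hw),
    ← integral_const_mul_two_mul, ← norm_eq_abs]
  refine intervalIntegral.norm_integral_le_of_norm_le hw (ae_of_all _ fun z hz => ?_)
    ((by fun_prop : Continuous _).intervalIntegrable _ _)
  have hz : 0 ≤ z := hz.1.le
  rw [norm_eq_abs, Frate, Frate, mul_div_assoc, mul_div_assoc, ← mul_sub, abs_mul,
    abs_of_nonneg (by linarith : 0 ≤ 2 * z), mul_comm]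
  gcongr
  calc _ ≤ |δ - γ| * |h₁ z - h₂ z| / m ^ 2 :=
        abs_div_one_add_mul_sub_le hm (hden₁ z hz) (hden₂ z hz)
    _ ≤ |δ - γ| * K / m ^ 2 := by gcongr; exact hK z hz

lemma abs_Fintegrand_sub_le (hh₁ : ContinuousOn h₁ (Ici 0)) (hh₂ : ContinuousOn h₂ (Ici 0))
    (hm : 0 < m) (hden₁ : ∀ t ≥ 0, m ≤ 1 + δ * h₁ t) (hden₂ : ∀ t ≥ 0, m ≤ 1 + δ * h₂ t)
    (hc₁ : ∀ t ≥ 0, c ≤ (1 + γ * h₁ t) / (1 + δ * h₁ t))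
    (hc₂ : ∀ t ≥ 0, c ≤ (1 + γ * h₂ t) / (1 + δ * h₂ t))
    (hK : ∀ t ≥ 0, |h₁ t - h₂ t| ≤ K) (hw : 0 ≤ w) :
    |Fintegrand δ γ h₁ w - Fintegrand δ γ h₂ w| ≤
      (|δ| / m ^ 2 + |δ - γ| / m ^ 3 * w ^ 2) * exp (-c * w ^ 2) * K := by
  have hK₀ : 0 ≤ K := (abs_nonneg _).trans (hK 0 le_rfl)
  have hu : |1 / (1 + δ * h₁ w) - 1 / (1 + δ * h₂ w)| ≤ |δ| * K / m ^ 2 := by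
    have h := abs_div_one_add_mul_sub_le (γ := 0) hm (hden₁ w hw) (hden₂ w hw)
    simp only [zero_mul, add_zero, sub_zero] at h
    exact h.trans (by gcongr; exact hK w hw)
  have hv : |1 / (1 + δ * h₂ w)| ≤ 1 / m := by
    rw [abs_of_pos (one_div_pos.2 (hm.trans_le (hden₂ w hw)))]
    exact one_div_le_one_div_of_le hm (hden₂ w hw)
  calc _ ≤ exp (-(c * w ^ 2)) * (|δ| * K / m ^ 2 + |δ - γ| * K / m ^ 2 * w ^ 2 * (1 / m)) :=
        (abs_exp_neg_mul_sub_exp_neg_mul_le (mul_sq_le_Fexponent hh₁ hm hden₁ hc₁ hw)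
          (mul_sq_le_Fexponent hh₂ hm hden₂ hc₂ hw)).trans
          (by gcongr; exact abs_Fexponent_sub_le hh₁ hh₂ hm hden₁ hden₂ hK hw)
    _ = _ := by rw [neg_mul]; field_simp

theorem abs_Fint_sub_le (hh₁ : ContinuousOn h₁ (Ici 0)) (hh₂ : ContinuousOn h₂ (Ici 0))
    (hm : 0 < m) (hden₁ : ∀ t ≥ 0, m ≤ 1 + δ * h₁ t) (hden₂ : ∀ t ≥ 0, m ≤ 1 + δ * h₂ t)
    (hc : 0 < c) (hc₁ : ∀ t ≥ 0, c ≤ (1 + γ * h₁ t) / (1 + δ * h₁ t))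
    (hc₂ : ∀ t ≥ 0, c ≤ (1 + γ * h₂ t) / (1 + δ * h₂ t))
    (hK : ∀ t ≥ 0, |h₁ t - h₂ t| ≤ K) (hx : 0 ≤ x) :
    |Fint δ γ h₁ x - Fint δ γ h₂ x| ≤
      (|δ| / m ^ 2 * (√(π / c) / 2) + |δ - γ| / m ^ 3 * (√π / (4 * c ^ ((3 : ℝ) / 2)))) * K := by
  have hK₀ : 0 ≤ K := (abs_nonneg _).trans (hK 0 le_rfl)
  rw [Fint_eq_integral_Fintegrand, Fint_eq_integral_Fintegrand,
    ← integral_Ioi_quadratic_mul_exp_neg_mul_sq hc, ← integral_mul_const]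
  exact abs_intervalIntegral_sub_le_setIntegral_Ioi hx
    ((continuousOn_Fintegrand hh₁ hm hden₁ hx).intervalIntegrable_of_Icc hx)
    ((continuousOn_Fintegrand hh₂ hm hden₂ hx).intervalIntegrable_of_Icc hx)
    ((integrableOn_Ioi_quadratic_mul_exp_neg_mul_sq hc _ _).mul_const K)
    (fun w _ => by positivity)
    fun w hw => abs_Fintegrand_sub_le hh₁ hh₂ hm hden₁ hden₂ hc₁ hc₂ hK hw.1.le

end

lemma M3_eq {δ γ : ℝ} (hδ : -1 < δ) (hγ : -1 < γ) :
    M3 δ γ = |δ| / min 1 (1 + δ) ^ 2 * (√(π / (min 1 (1 + γ) / max 1 (1 + δ))) / 2) +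
      |δ - γ| / min 1 (1 + δ) ^ 3 *
        (√π / (4 * (min 1 (1 + γ) / max 1 (1 + δ)) ^ ((3 : ℝ) / 2))) := by
  have hm : 0 < min 1 (1 + δ) := lt_min one_pos (by linarith)
  have hn : 0 < min 1 (1 + γ) := lt_min one_pos (by linarith)
  have hM : 0 < max 1 (1 + δ) := one_pos.trans_le (le_max_left _ _)
  rw [M3, ← sqrt_eq_rpow, ← sqrt_eq_rpow, show (3 : ℝ) / 2 = 1 + 1 / 2 by norm_num,
    rpow_add (div_pos hn hM), rpow_one, ← sqrt_eq_rpow]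
  generalize min 1 (1 + δ) = m at hm ⊢
  generalize min 1 (1 + γ) = n at hn ⊢
  generalize max 1 (1 + δ) = M at hM ⊢
  obtain ⟨a, ha, rfl⟩ : ∃ a, 0 < a ∧ n = a ^ 2 := ⟨√n, sqrt_pos.2 hn, (sq_sqrt hn.le).symm⟩
  obtain ⟨b, hb, rfl⟩ : ∃ b, 0 < b ∧ M = b ^ 2 := ⟨√M, sqrt_pos.2 hM, (sq_sqrt hM.le).symm⟩
  rw [div_div_eq_mul_div, sqrt_div' _ (sq_nonneg a), sqrt_div' _ (sq_nonneg b),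
    sqrt_mul pi_pos.le, sqrt_sq ha.le, sqrt_sq hb.le]
  field_simp
  ring

theorem abs_Fint_sub_le_M3_mul {δ γ K x : ℝ} {h₁ h₂ : ℝ → ℝ} (hδ : -1 < δ) (hγ : -1 < γ)
    (hh₁ : ContinuousOn h₁ (Ici 0)) (hh₂ : ContinuousOn h₂ (Ici 0))
    (hb₁ : ∀ t ≥ 0, 0 ≤ h₁ t ∧ h₁ t ≤ 1) (hb₂ : ∀ t ≥ 0, 0 ≤ h₂ t ∧ h₂ t ≤ 1)
    (hK : ∀ t ≥ 0, |h₁ t - h₂ t| ≤ K) (hx : 0 ≤ x) :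
    |Fint δ γ h₁ x - Fint δ γ h₂ x| ≤ M3 δ γ * K := by
  have hden {h : ℝ → ℝ} (hb : ∀ t ≥ 0, 0 ≤ h t ∧ h t ≤ 1) (t : ℝ) (ht : t ≥ 0) :
      min 1 (1 + δ) ≤ 1 + δ * h t :=
    min_one_le_one_add_mul (hb t ht).1 (hb t ht).2
  have hratio {h : ℝ → ℝ} (hb : ∀ t ≥ 0, 0 ≤ h t ∧ h t ≤ 1) (t : ℝ) (ht : t ≥ 0) :
      min 1 (1 + γ) / max 1 (1 + δ) ≤ (1 + γ * h t) / (1 + δ * h t) :=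
    min_div_max_le_div_one_add_mul hδ hγ.le (hb t ht).1 (hb t ht).2
  rw [M3_eq hδ hγ]
  exact abs_Fint_sub_le hh₁ hh₂ (lt_min one_pos (by linarith)) (hden hb₁) (hden hb₂)
    (div_pos (lt_min one_pos (by linarith)) (one_pos.trans_le (le_max_left _ _)))
    (hratio hb₁) (hratio hb₂) hK hx

theorem F_Lipschitz_in_h (δ γ : ℝ) (hδ : -1 < δ) (hγ : -1 < γ)
    (h₁ h₂ : ℝ → ℝ)
    (hcont₁ : ContinuousOn h₁ (Set.Ici 0)) (hcont₂ : ContinuousOn h₂ (Set.Ici 0))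
    (hb₁ : ∀ x ≥ (0:ℝ), 0 ≤ h₁ x ∧ h₁ x ≤ 1)
    (hb₂ : ∀ x ≥ (0:ℝ), 0 ≤ h₂ x ∧ h₂ x ≤ 1) :
    (∀ x ≥ (0:ℝ),
      |Fint δ γ h₁ x - Fint δ γ h₂ x| ≤ M3 δ γ * ⨆ t : Set.Ici (0:ℝ), |h₁ t - h₂ t|) ∧
    (∀ L₁ L₂ : ℝ, Tendsto (Fint δ γ h₁) atTop (nhds L₁) →
      Tendsto (Fint δ γ h₂) atTop (nhds L₂) →
      |L₁ - L₂| ≤ M3 δ γ * ⨆ t : Set.Ici (0:ℝ), |h₁ t - h₂ t|) := by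
  have hbdd : BddAbove (range fun t : Ici (0 : ℝ) => |h₁ t - h₂ t|) := by
    refine ⟨1, ?_⟩
    rintro _ ⟨t, rfl⟩
    obtain ⟨h₁₀, h₁₁⟩ := hb₁ t t.2
    obtain ⟨h₂₀, h₂₁⟩ := hb₂ t t.2
    exact abs_sub_le_iff.2 ⟨by linarith, by linarith⟩
  have hF (x : ℝ) (hx : x ≥ 0) :
      |Fint δ γ h₁ x - Fint δ γ h₂ x| ≤ M3 δ γ * ⨆ t : Set.Ici (0:ℝ), |h₁ t - h₂ t| :=
    abs_Fint_sub_le_M3_mul hδ hγ hcont₁ hcont₂ hb₁ hb₂ (fun t ht => le_ciSup hbdd ⟨t, ht⟩) hx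
  refine ⟨hF, fun L₁ L₂ hL₁ hL₂ => le_of_tendsto (hL₁.sub hL₂).abs ?_⟩
  filter_upwards [eventually_ge_atTop 0] with x hx using hF x hx
end

section
/- Let δ, γ ∈ (−1, +∞) and let h₁, h₂ : [0,∞) → ℝ be continuous with 0 ≤ hᵢ(x) ≤ 1 for all x ≥ 0 (i = 1, 2). Then for every x ≥ 0, |T(h₁)(x) − T(h₂)(x)| ≤ M₂(δ,γ)·(|F(x; h₁) − F(x; h₂)| + |F(+∞; h₁) − F(+∞; h₂)|), where M₂(δ,γ) := 2·max(1,1+δ)·max(1,1+γ)^{1/2} / (√π·min(1,1+δ)^{1/2}). -/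
/-!
The integrand of `F(·; h)` is positive, so `0 ≤ F(x; h) ≤ F(+∞; h)`. As `0 ≤ h ≤ 1`, we have
`min 1 (1 + δ) ≤ 1 + δ h ≤ max 1 (1 + δ)` and `1 + γ h ≤ max 1 (1 + γ)`, so the exponent is at most
`c w²` with `c = max 1 (1 + γ) / min 1 (1 + δ)` and the integrand is at least
`exp (-c w²) / max 1 (1 + δ)`; the Gaussian integral then gives `F(+∞; h) ≥ 1 / M₂(δ, γ)`.
The estimate follows from `a / L₁ - b / L₂ = ((a - b) + (b / L₂) (L₂ - L₁)) / L₁` and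
`0 ≤ b / L₂ ≤ 1`.
-/

open Real Filter Set

/-- The constant `M₂(δ,γ)` from the paper. -/
noncomputable def M2 (δ γ : ℝ) : ℝ :=
  2 * (max 1 (1+δ)) * (max 1 (1+γ)) ^ ((1:ℝ)/2) /
    (Real.sqrt π * (min 1 (1+δ)) ^ ((1:ℝ)/2))

open MeasureTheory intervalIntegral

lemma abs_div_sub_div_le {a b L₁ L₂ : ℝ} (hL₁ : 0 < L₁) (hL₂ : 0 < L₂) (hb : 0 ≤ b)
    (hbL : b ≤ L₂) : |a / L₁ - b / L₂| ≤ (|a - b| + |L₁ - L₂|) / L₁ := by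
  have hsplit : a / L₁ - b / L₂ = ((a - b) + b / L₂ * (L₂ - L₁)) / L₁ := by
    field_simp
    ring
  have hratio : |b / L₂| ≤ 1 := by
    rw [abs_of_nonneg (div_nonneg hb hL₂.le)]
    exact (div_le_one hL₂).2 hbL
  rw [hsplit, abs_div, abs_of_pos hL₁]
  gcongr
  calc |a - b + b / L₂ * (L₂ - L₁)| ≤ |a - b| + |b / L₂| * |L₂ - L₁| := by
        rw [← abs_mul]; exact abs_add_le _ _
    _ ≤ |a - b| + |L₁ - L₂| := by
        rw [abs_sub_comm L₂]
        gcongr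
        exact mul_le_of_le_one_left (abs_nonneg _) hratio

lemma min_le_one_add_mul {c t : ℝ} (ht₀ : 0 ≤ t) (ht₁ : t ≤ 1) : min 1 (1 + c) ≤ 1 + c * t := by
  rcases le_total 0 c with hc | hc
  · exact (min_le_left _ _).trans (by nlinarith)
  · exact (min_le_right _ _).trans (by nlinarith)

lemma one_add_mul_le_max {c t : ℝ} (ht₀ : 0 ≤ t) (ht₁ : t ≤ 1) : 1 + c * t ≤ max 1 (1 + c) := by
  rcases le_total 0 c with hc | hc
  · exact (by nlinarith : 1 + c * t ≤ 1 + c).trans (le_max_right _ _)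
  · exact (by nlinarith : 1 + c * t ≤ 1).trans (le_max_left _ _)

lemma min_one_one_add_pos {δ : ℝ} (hδ : -1 < δ) : 0 < min 1 (1 + δ) :=
  lt_min one_pos (by linarith)

lemma inv_M2_eq (δ γ : ℝ) (hδ : -1 < δ) :
    (M2 δ γ)⁻¹ = √(π / (max 1 (1 + γ) / min 1 (1 + δ))) / 2 / max 1 (1 + δ) := by
  have hm := min_one_one_add_pos hδ
  have hB : 0 < max 1 (1 + γ) := one_pos.trans_le (le_max_left _ _)
  rw [M2, div_div_eq_mul_div, sqrt_div (by positivity), sqrt_mul pi_pos.le,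
    ← sqrt_eq_rpow, ← sqrt_eq_rpow]
  have := sqrt_pos.2 hB
  field_simp

lemma M2_pos (δ γ : ℝ) (hδ : -1 < δ) : 0 < M2 δ γ := by
  have hA : 0 < max 1 (1 + δ) := one_pos.trans_le (le_max_left _ _)
  have hc : 0 < max 1 (1 + γ) / min 1 (1 + δ) :=
    div_pos (one_pos.trans_le (le_max_left _ _)) (min_one_one_add_pos hδ)
  rw [← inv_pos, inv_M2_eq δ γ hδ]
  positivity

noncomputable def FintRate (δ γ : ℝ) (h : ℝ → ℝ) (z : ℝ) : ℝ :=
  2 * z * (1 + γ * h z) / (1 + δ * h z)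

noncomputable def FintDensity (δ γ : ℝ) (h : ℝ → ℝ) (w : ℝ) : ℝ :=
  exp (-(∫ z in (0:ℝ)..w, FintRate δ γ h z)) * (1 / (1 + δ * h w))

lemma Fint_eq_integral_FintDensity (δ γ : ℝ) (h : ℝ → ℝ) (x : ℝ) :
    Fint δ γ h x = ∫ w in (0:ℝ)..x, FintDensity δ γ h w := rfl

section

variable {δ γ : ℝ} {h : ℝ → ℝ}

lemma one_add_mul_pos_s10 (hδ : -1 < δ) (hb : ∀ x ≥ (0:ℝ), 0 ≤ h x ∧ h x ≤ 1) {w : ℝ}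
    (hw : 0 ≤ w) : 0 < 1 + δ * h w :=
  (min_one_one_add_pos hδ).trans_le (min_le_one_add_mul (hb w hw).1 (hb w hw).2)

lemma continuousOn_FintRate (hδ : -1 < δ) (hcont : ContinuousOn h (Ici 0))
    (hb : ∀ x ≥ (0:ℝ), 0 ≤ h x ∧ h x ≤ 1) : ContinuousOn (FintRate δ γ h) (Ici 0) := by
  unfold FintRate
  exact ((continuousOn_const.mul continuousOn_id).mul (continuousOn_const.add
    (continuousOn_const.mul hcont))).div (continuousOn_const.add (continuousOn_const.mul hcont))
    fun w hw => (one_add_mul_pos_s10 hδ hb hw).ne'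

lemma continuousOn_FintDensity (hδ : -1 < δ) (hcont : ContinuousOn h (Ici 0))
    (hb : ∀ x ≥ (0:ℝ), 0 ≤ h x ∧ h x ≤ 1) (x : ℝ) :
    ContinuousOn (FintDensity δ γ h) (Icc 0 x) := by
  rcases lt_or_ge x 0 with hx | hx
  · simp [Icc_eq_empty_of_lt hx]
  have hsub : Icc 0 x ⊆ Ici 0 := Icc_subset_Ici_self
  have hprim : ContinuousOn (fun w => ∫ z in (0:ℝ)..w, FintRate δ γ h z) (Icc 0 x) := by
    rw [← uIcc_of_le hx]
    refine continuousOn_primitive_interval ?_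
    rw [uIcc_of_le hx]
    exact ((continuousOn_FintRate hδ hcont hb).mono hsub).integrableOn_compact isCompact_Icc
  exact (continuous_exp.comp_continuousOn hprim.neg).mul (continuousOn_const.div
    (continuousOn_const.add (continuousOn_const.mul (hcont.mono hsub)))
    fun w hw => (one_add_mul_pos_s10 hδ hb hw.1).ne')

lemma intervalIntegrable_FintDensity (hδ : -1 < δ) (hcont : ContinuousOn h (Ici 0))
    (hb : ∀ x ≥ (0:ℝ), 0 ≤ h x ∧ h x ≤ 1) {a b : ℝ} (ha : 0 ≤ a) (hb' : 0 ≤ b) :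
    IntervalIntegrable (FintDensity δ γ h) volume a b :=
  ((continuousOn_FintDensity hδ hcont hb (max a b)).mono
    (uIcc_subset_Icc ⟨ha, le_max_left a b⟩ ⟨hb', le_max_right a b⟩)).intervalIntegrable

lemma FintDensity_pos (hδ : -1 < δ) (hb : ∀ x ≥ (0:ℝ), 0 ≤ h x ∧ h x ≤ 1) {w : ℝ}
    (hw : 0 ≤ w) : 0 < FintDensity δ γ h w :=
  mul_pos (exp_pos _) (one_div_pos.2 (one_add_mul_pos_s10 hδ hb hw))

lemma Fint_nonneg (hδ : -1 < δ) (hb : ∀ x ≥ (0:ℝ), 0 ≤ h x ∧ h x ≤ 1) {x : ℝ} (hx : 0 ≤ x) :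
    0 ≤ Fint δ γ h x :=
  integral_nonneg hx fun _ hw => (FintDensity_pos hδ hb hw.1).le

lemma monotoneOn_Fint (hδ : -1 < δ) (hcont : ContinuousOn h (Ici 0))
    (hb : ∀ x ≥ (0:ℝ), 0 ≤ h x ∧ h x ≤ 1) : MonotoneOn (Fint δ γ h) (Ici 0) := by
  intro x hx y _ hxy
  simp only [Fint_eq_integral_FintDensity]
  rw [← integral_add_adjacent_intervals (intervalIntegrable_FintDensity hδ hcont hb le_rfl hx)
    (intervalIntegrable_FintDensity hδ hcont hb hx (le_trans hx hxy))]
  exact le_add_of_nonneg_right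
    (integral_nonneg hxy fun _ hw => (FintDensity_pos hδ hb (le_trans hx hw.1)).le)

lemma Fint_le_of_tendsto (hδ : -1 < δ) (hcont : ContinuousOn h (Ici 0))
    (hb : ∀ x ≥ (0:ℝ), 0 ≤ h x ∧ h x ≤ 1) {L : ℝ} (hL : Tendsto (Fint δ γ h) atTop (nhds L))
    {x : ℝ} (hx : 0 ≤ x) : Fint δ γ h x ≤ L :=
  ge_of_tendsto hL <| (eventually_ge_atTop x).mono fun _ hy =>
    monotoneOn_Fint hδ hcont hb hx (le_trans hx hy) hy

lemma integral_FintRate_le (hδ : -1 < δ) (hcont : ContinuousOn h (Ici 0))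
    (hb : ∀ x ≥ (0:ℝ), 0 ≤ h x ∧ h x ≤ 1) {w : ℝ} (hw : 0 ≤ w) :
    ∫ z in (0:ℝ)..w, FintRate δ γ h z ≤ max 1 (1 + γ) / min 1 (1 + δ) * w ^ 2 := by
  set c := max 1 (1 + γ) / min 1 (1 + δ)
  have hm := min_one_one_add_pos hδ
  have hrate : ∀ z ∈ Icc 0 w, FintRate δ γ h z ≤ 2 * c * z := fun z hz => by
    obtain ⟨h₀, h₁⟩ := hb z hz.1
    calc FintRate δ γ h z ≤ 2 * z * max 1 (1 + γ) / min 1 (1 + δ) :=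
          div_le_div₀ (by have := hz.1; positivity)
            (mul_le_mul_of_nonneg_left (one_add_mul_le_max h₀ h₁) (by linarith [hz.1]))
            hm (min_le_one_add_mul h₀ h₁)
      _ = 2 * c * z := by ring
  calc ∫ z in (0:ℝ)..w, FintRate δ γ h z ≤ ∫ z in (0:ℝ)..w, 2 * c * z :=
        integral_mono_on hw (((continuousOn_FintRate hδ hcont hb).mono
          Icc_subset_Ici_self).intervalIntegrable_of_Icc hw)
          ((by fun_prop : Continuous fun z : ℝ => 2 * c * z).intervalIntegrable _ _) hrate
    _ = c * w ^ 2 := by rw [intervalIntegral.integral_const_mul, integral_id]; ring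

lemma exp_neg_mul_sq_div_le_FintDensity (hδ : -1 < δ) (hcont : ContinuousOn h (Ici 0))
    (hb : ∀ x ≥ (0:ℝ), 0 ≤ h x ∧ h x ≤ 1) {w : ℝ} (hw : 0 ≤ w) :
    exp (-(max 1 (1 + γ) / min 1 (1 + δ)) * w ^ 2) / max 1 (1 + δ) ≤ FintDensity δ γ h w := by
  obtain ⟨h₀, h₁⟩ := hb w hw
  rw [div_eq_mul_one_div, neg_mul]
  exact mul_le_mul (exp_le_exp.2 (neg_le_neg (integral_FintRate_le hδ hcont hb hw)))
    (one_div_le_one_div_of_le (one_add_mul_pos_s10 hδ hb hw) (one_add_mul_le_max h₀ h₁))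
    (by positivity) (exp_pos _).le

lemma inv_M2_le_of_tendsto (hδ : -1 < δ) (hcont : ContinuousOn h (Ici 0))
    (hb : ∀ x ≥ (0:ℝ), 0 ≤ h x ∧ h x ≤ 1) {L : ℝ} (hL : Tendsto (Fint δ γ h) atTop (nhds L)) :
    (M2 δ γ)⁻¹ ≤ L := by
  set c := max 1 (1 + γ) / min 1 (1 + δ)
  have hc : 0 < c := div_pos (one_pos.trans_le (le_max_left _ _)) (min_one_one_add_pos hδ)
  have hgauss : Tendsto (fun x => ∫ w in (0:ℝ)..x, exp (-c * w ^ 2) / max 1 (1 + δ)) atTop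
      (nhds ((M2 δ γ)⁻¹)) := by
    rw [inv_M2_eq δ γ hδ, ← integral_gaussian_Ioi, ← MeasureTheory.integral_div]
    exact intervalIntegral_tendsto_integral_Ioi 0
      ((integrable_exp_neg_mul_sq hc).div_const _).integrableOn tendsto_id
  refine le_of_tendsto_of_tendsto hgauss hL <| (eventually_ge_atTop 0).mono fun x hx => ?_
  exact integral_mono_on hx
    ((by fun_prop : Continuous fun w : ℝ => exp (-c * w ^ 2) / max 1 (1 + δ)).intervalIntegrable _ _)
    (intervalIntegrable_FintDensity hδ hcont hb le_rfl hx)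
    fun w hw => exp_neg_mul_sq_div_le_FintDensity hδ hcont hb hw.1

end

theorem T_diff_estimate_general (δ γ : ℝ) (hδ : -1 < δ)
    (h₁ h₂ : ℝ → ℝ)
    (hcont₁ : ContinuousOn h₁ (Set.Ici 0)) (hcont₂ : ContinuousOn h₂ (Set.Ici 0))
    (hb₁ : ∀ x ≥ (0:ℝ), 0 ≤ h₁ x ∧ h₁ x ≤ 1)
    (hb₂ : ∀ x ≥ (0:ℝ), 0 ≤ h₂ x ∧ h₂ x ≤ 1)
    (L₁ L₂ : ℝ) (hL₁ : Tendsto (Fint δ γ h₁) atTop (nhds L₁))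
    (hL₂ : Tendsto (Fint δ γ h₂) atTop (nhds L₂)) :
    ∀ x ≥ (0:ℝ),
      |Fint δ γ h₁ x / L₁ - Fint δ γ h₂ x / L₂| ≤
        M2 δ γ * (|Fint δ γ h₁ x - Fint δ γ h₂ x| + |L₁ - L₂|) := by
  intro x hx
  have hM : 0 < (M2 δ γ)⁻¹ := inv_pos.2 (M2_pos δ γ hδ)
  have hL₁_lb := inv_M2_le_of_tendsto hδ hcont₁ hb₁ hL₁
  have hL₁_pos := hM.trans_le hL₁_lb
  have hL₂_pos := hM.trans_le (inv_M2_le_of_tendsto hδ hcont₂ hb₂ hL₂)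
  calc |Fint δ γ h₁ x / L₁ - Fint δ γ h₂ x / L₂|
      ≤ (|Fint δ γ h₁ x - Fint δ γ h₂ x| + |L₁ - L₂|) / L₁ :=
        abs_div_sub_div_le hL₁_pos hL₂_pos (Fint_nonneg hδ hb₂ hx)
          (Fint_le_of_tendsto hδ hcont₂ hb₂ hL₂ hx)
    _ ≤ M2 δ γ * (|Fint δ γ h₁ x - Fint δ γ h₂ x| + |L₁ - L₂|) := by
        rw [div_eq_inv_mul]
        gcongr
        exact inv_le_of_inv_le₀ (M2_pos δ γ hδ) hL₁_lb

theorem T_diff_estimate (δ γ : ℝ) (hδ : -1 < δ) (hγ : -1 < γ)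
    (h₁ h₂ : ℝ → ℝ)
    (hcont₁ : ContinuousOn h₁ (Set.Ici 0)) (hcont₂ : ContinuousOn h₂ (Set.Ici 0))
    (hb₁ : ∀ x ≥ (0:ℝ), 0 ≤ h₁ x ∧ h₁ x ≤ 1)
    (hb₂ : ∀ x ≥ (0:ℝ), 0 ≤ h₂ x ∧ h₂ x ≤ 1)
    (L₁ L₂ : ℝ) (hL₁ : Tendsto (Fint δ γ h₁) atTop (nhds L₁))
    (hL₂ : Tendsto (Fint δ γ h₂) atTop (nhds L₂)) :
    ∀ x ≥ (0:ℝ),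
      |Fint δ γ h₁ x / L₁ - Fint δ γ h₂ x / L₂| ≤
        M2 δ γ * (|Fint δ γ h₁ x - Fint δ γ h₂ x| + |L₁ - L₂|) :=
  T_diff_estimate_general δ γ hδ h₁ h₂ hcont₁ hcont₂ hb₁ hb₂ L₁ L₂ hL₁ hL₂
end
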